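/- arXiv:math/0408331 — 3 statements merged into one kernel-verified Lean document; each statement's English description precedes it below -/
import Mathlib

section
/- If M is a matching in the Hasse diagram H of a simplicial complex, then every directed cycle D in H(M) stays within one level of the Hasse diagram: the set of dimensions of faces visited by D equals {i, i+1} for some i. -/
open Finset

variable {V : Type*} [DecidableEq V]

/-- A finite abstract simplicial complex on vertex set `V`: a finite family of
nonempty finite subsets closed under taking nonempty subsets. -/
structure SC (V : Type*) [DecidableEq V] where
  faces : Finset (Finset V)
  nonempty_mem : ∀ F ∈ faces, F.Nonempty
  down_closed : ∀ F ∈ faces, ∀ G : Finset V, G.Nonempty → G ⊆ F → G ∈ faces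

/-- Arcs of the Hasse diagram: pairs `(G, F)` with `F ≺ G` (covering relation),
directed from the higher- to the lower-dimensional face. -/
def arcs (Δ : SC V) : Finset (Finset V × Finset V) :=
  (Δ.faces ×ˢ Δ.faces).filter fun p => p.2 ⊆ p.1 ∧ p.2.card + 1 = p.1.card

/-- The set `δ(F)` of arcs incident to the face `F`. -/
def inc (Δ : SC V) (F : Finset V) : Finset (Finset V × Finset V) :=
  (arcs Δ).filter fun a => a.1 = F ∨ a.2 = F

/-- `M` is a matching in the Hasse diagram: a set of arcs such that each face is
incident to at most one arc of `M`. -/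
def IsMatching (Δ : SC V) (M : Finset (Finset V × Finset V)) : Prop :=
  M ⊆ arcs Δ ∧ ∀ a ∈ M, ∀ b ∈ M, a ≠ b →
    a.1 ≠ b.1 ∧ a.1 ≠ b.2 ∧ a.2 ≠ b.1 ∧ a.2 ≠ b.2

/-- The arc relation of the modified Hasse diagram `H(M)`: arcs of `H` with the
arcs of `M` reversed. -/
def HMrel (Δ : SC V) (M : Finset (Finset V × Finset V)) (X Y : Finset V) : Prop :=
  ((X, Y) ∈ arcs Δ ∧ (X, Y) ∉ M) ∨ (Y, X) ∈ M

/-- A simple directed cycle of length `n` in the relation `r`,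
given as an injective cyclic sequence of vertices. -/
def IsDirCycle {α : Type*} (r : α → α → Prop) (n : ℕ) (c : ZMod n → α) : Prop :=
  2 ≤ n ∧ Function.Injective c ∧ ∀ i, r (c i) (c (i + 1))

/-- A Morse matching: a matching `M` such that `H(M)` is acyclic. -/
def IsMorse (Δ : SC V) (M : Finset (Finset V × Finset V)) : Prop :=
  IsMatching Δ M ∧ ∀ (n : ℕ) (c : ZMod n → Finset V), ¬ IsDirCycle (HMrel Δ M) n c

/-- Every directed cycle in `H(M)` stays within one level of the
Hasse diagram: the set of dimensions (here expressed via cardinalities,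
`dim F = |F| - 1`) of the visited faces equals `{i, i+1}` for some `i`. -/
theorem dirCycle_within_one_level (Δ : SC V) (M : Finset (Finset V × Finset V))
    (hM : IsMatching Δ M) (n : ℕ) (c : ZMod n → Finset V)
    (hc : IsDirCycle (HMrel Δ M) n c) :
    ∃ i : ℕ, (∀ j : ZMod n, (c j).card = i + 1 ∨ (c j).card = i + 2) ∧
      (∃ j : ZMod n, (c j).card = i + 1) ∧ (∃ j : ZMod n, (c j).card = i + 2) := by
  obtain ⟨hn, hinj, hstep⟩ := hc
  haveI : NeZero n := ⟨by omega⟩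
  haveI : Fact (1 < n) := ⟨hn⟩
  set f : ZMod n → ℕ := fun j => (c j).card with hf
  -- each step goes up via a matched arc, or down
  have hA : ∀ j : ZMod n, ((c (j+1), c j) ∈ M ∧ f (j+1) = f j + 1) ∨ (f (j+1) + 1 = f j) := by
    intro j
    rcases hstep j with ⟨harc, -⟩ | hm
    · right
      exact ((Finset.mem_filter.mp harc).2).2
    · left
      refine ⟨hm, ?_⟩
      have h2 : (c j).card + 1 = (c (j+1)).card := ((Finset.mem_filter.mp (hM.1 hm)).2).2
      simp only [hf]
      omega
  have hface : ∀ j : ZMod n, c j ∈ Δ.faces := by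
    intro j
    rcases hstep j with ⟨harc, -⟩ | hm
    · exact (Finset.mem_product.mp (Finset.mem_filter.mp harc).1).1
    · exact (Finset.mem_product.mp (Finset.mem_filter.mp (hM.1 hm)).1).2
  -- no two consecutive up-steps
  have hC : ∀ j : ZMod n, (c (j+1), c j) ∈ M → f (j+1+1) + 1 = f (j+1) := by
    intro j hm
    rcases hA (j+1) with ⟨hm2, -⟩ | h
    · exfalso
      have hne : (c (j+1+1), c (j+1)) ≠ (c (j+1), c j) := by
        intro h
        have h1 : c (j+1+1) = c (j+1) := congrArg Prod.fst h
        have h2 := hinj h1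
        have h3 : (1 : ZMod n) = 0 := by
          have := add_left_cancel (a := j+1) (b := 1) (c := 0)
            (by rw [add_zero]; exact h2)
          exact this
        exact one_ne_zero h3
      exact (hM.2 _ hm2 _ hm hne).2.2.1 rfl
    · exact h
  obtain ⟨j0, -, hj0⟩ := Finset.exists_min_image Finset.univ f ⟨0, Finset.mem_univ 0⟩
  set m := f j0 with hm0
  have hmin : ∀ j, m ≤ f j := fun j => hj0 j (Finset.mem_univ j)
  -- at a minimum, the step must go up
  have hB : ∀ j : ZMod n, f j = m → ((c (j+1), c j) ∈ M ∧ f (j+1) = m + 1) := by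
    intro j hj
    rcases hA j with ⟨hm', h'⟩ | h
    · exact ⟨hm', by rw [h', hj]⟩
    · exfalso; have := hmin (j+1); omega
  have key : ∀ k : ℕ, f (j0 + (2*k : ℕ)) = m := by
    intro k
    induction k with
    | zero => simp [hm0]
    | succ k ih =>
      obtain ⟨hmArc, h1⟩ := hB _ ih
      have h2 := hC _ hmArc
      have heq : (j0 + ((2*(k+1) : ℕ) : ZMod n)) = j0 + ((2*k : ℕ) : ZMod n) + 1 + 1 := by
        push_cast; ring
      rw [heq]
      omega
  have keyodd : ∀ k : ℕ, f (j0 + (2*k : ℕ) + 1) = m + 1 := fun k => (hB _ (key k)).2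
  have hcover : ∀ j : ZMod n, f j = m ∨ f j = m + 1 := by
    intro j
    have hj : j = j0 + (((j - j0).val : ℕ) : ZMod n) := by
      rw [ZMod.natCast_rightInverse]; ring
    set k := (j - j0).val with hk
    rcases Nat.even_or_odd k with ⟨t, ht⟩ | ⟨t, ht⟩
    · left
      have : (k : ZMod n) = ((2*t : ℕ) : ZMod n) := by rw [ht]; push_cast; ring
      rw [hj, this]; exact key t
    · right
      have : ((k : ℕ) : ZMod n) = ((2*t : ℕ) : ZMod n) + 1 := by rw [ht]; push_cast; ring
      rw [hj, this, ← add_assoc]; exact keyodd t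
  have hmcard : m = (c j0).card := hm0
  have hm1 : 1 ≤ m := by
    have h1 := Δ.nonempty_mem _ (hface j0)
    have h2 := Finset.card_pos.mpr h1
    omega
  refine ⟨m - 1, ?_, ⟨j0, by omega⟩, ⟨j0 + 1, ?_⟩⟩
  · intro j
    rcases hcover j with h | h
    · left; simp only [hf] at h; omega
    · right; simp only [hf] at h; omega
  · have := (hB j0 rfl).2
    simp only [hf] at this; omega
end

section
/- A binary vector x ∈ {0,1}^A is the incidence vector of a Morse matching if and only if x satisfies all matching inequalities x(δ(F)) ≤ 1 for every face F, and all cycle inequalities x(C) ≤ |C|/2 − 1 for every undirected cycle C contained in a single level H_i of the Hasse diagram. -/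
open Finset

variable {V : Type*} [DecidableEq V]

/-- The arc of the Hasse diagram corresponding to an undirected Hasse edge
between the faces `F` and `G` (oriented from the larger to the smaller face). -/
def edgeArc (F G : Finset V) : Finset V × Finset V :=
  if F.card < G.card then (G, F) else (F, G)

/-- A simple undirected cycle inside the level `H_i` of the Hasse diagram, given
as an injective cyclic sequence of pairwise adjacent faces of dimensions `i`
and `i+1`. -/
def IsLevelCycle (Δ : SC V) (i n : ℕ) (c : ZMod n → Finset V) : Prop :=
  3 ≤ n ∧ Function.Injective c ∧
    (∀ j, (c j, c (j + 1)) ∈ arcs Δ ∨ (c (j + 1), c j) ∈ arcs Δ) ∧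
    (∀ j, (c j).card = i + 1 ∨ (c j).card = i + 2)

/-- The value `x(C)` of a cycle: the sum of `x` over the (arcs corresponding to
the) edges of the cycle. -/
def cycleSum (x : Finset V × Finset V → ℝ) (n : ℕ) (c : ZMod n → Finset V) : ℝ :=
  ∑ j ∈ Finset.range n, x (edgeArc (c (j : ZMod n)) (c ((j : ZMod n) + 1)))

/-!
Along a closed walk in the Hasse diagram the dimension changes by ±1 at every step, so exactly
half of the steps ascend. On a level cycle `C` the edges of a matching `M` are pairwise
non-adjacent, hence `x(C) ≤ |C|/2`; in case of equality they alternate with the ascending steps,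
which orients `C` coherently (forwards or backwards) in `H(M)`, a directed cycle. Conversely, on
a directed cycle of `H(M)` the ascending steps are exactly the reversed arcs of `M`; being half of
the steps and pairwise non-adjacent they alternate, so the cycle stays inside one level and has
`x(C) = |C|/2`, violating its cycle inequality.
-/

namespace ZMod

theorem ne_add_one_add_one {n : ℕ} (hn : 3 ≤ n) (j : ZMod n) : j ≠ j + 1 + 1 := by
  rw [add_assoc, ne_eq, left_eq_add, one_add_one_eq_two, ← Nat.cast_two, natCast_eq_zero_iff]
  exact fun h => by have := Nat.le_of_dvd two_pos h; omega

variable {n : ℕ} [NeZero n]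

theorem forall_of_add_one {p : ZMod n → Prop} (h0 : p 0) (hstep : ∀ j, p j → p (j + 1))
    (j : ZMod n) : p j := by
  have hnat : ∀ k : ℕ, p k := fun k => by
    induction k with
    | zero => simpa using h0
    | succ k ih => simpa using hstep _ ih
  simpa using hnat j.val

theorem forall_iff_of_add_one_iff {p : ZMod n → Prop} (h : ∀ j, p (j + 1) ↔ p j)
    (j : ZMod n) : p j ↔ p 0 :=
  forall_of_add_one (p := fun j => p j ↔ p 0) Iff.rfl (fun j hj => (h j).trans hj) j

theorem sum_range_natCast {M : Type*} [AddCommMonoid M] (f : ZMod n → M) :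
    ∑ j ∈ range n, f j = ∑ j : ZMod n, f j := by
  refine sum_nbij' (fun j => j) (fun j => j.val) (fun _ _ => mem_univ _)
    (fun j _ => mem_range.2 j.val_lt) (fun j hj => val_cast_of_lt (mem_range.1 hj))
    (fun j _ => natCast_zmod_val j) (fun _ _ => rfl)

theorem map_subRight_one_subset_compl {S : Finset (ZMod n)} (hS : ∀ j ∈ S, j + 1 ∉ S) :
    S.map (Equiv.subRight 1).toEmbedding ⊆ Sᶜ := fun j hj => by
  rw [mem_map_equiv, Equiv.subRight_symm_apply] at hj
  exact mem_compl.2 fun h => hS j h hj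

theorem two_mul_card_le_of_add_one_notMem {S : Finset (ZMod n)}
    (hS : ∀ j ∈ S, j + 1 ∉ S) : 2 * #S ≤ n := by
  have := card_le_card (map_subRight_one_subset_compl hS)
  rw [card_map, card_compl, ZMod.card] at this
  have := card_le_univ S
  rw [ZMod.card] at this
  omega

theorem add_one_mem_iff_of_two_mul_card_eq {S : Finset (ZMod n)}
    (hS : ∀ j ∈ S, j + 1 ∉ S) (hcard : 2 * #S = n) (j : ZMod n) :
    j + 1 ∈ S ↔ j ∉ S := by
  refine ⟨fun h hj => hS j hj h, fun hj => ?_⟩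
  have hshift := eq_of_subset_of_card_le (map_subRight_one_subset_compl hS)
    (by rw [card_map, card_compl, ZMod.card]; omega)
  have : j ∈ S.map (Equiv.subRight 1).toEmbedding := hshift ▸ mem_compl.2 hj
  simpa using this

theorem two_mul_card_ascents {f : ZMod n → ℕ}
    (hf : ∀ j, f (j + 1) = f j + 1 ∨ f j = f (j + 1) + 1) :
    2 * #{j | f j < f (j + 1)} = n := by
  have hdiff : ∀ j, (f (j + 1) : ℤ) - f j = if f j < f (j + 1) then 1 else -1 := fun j => by
    have := hf j
    split_ifs <;> omega
  have htel : ∑ j, ((f (j + 1) : ℤ) - f j) = 0 := by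
    rw [sum_sub_distrib, Fintype.sum_equiv (Equiv.addRight 1) (fun j => (f (j + 1) : ℤ))
      (fun j => (f j : ℤ)) (fun _ => rfl), sub_self]
  rw [sum_congr rfl fun j _ => hdiff j, sum_ite, sum_const, sum_const] at htel
  have hsplit := card_filter_add_card_filter_not (s := univ) fun j => f j < f (j + 1)
  rw [card_univ, ZMod.card] at hsplit
  simp only [nsmul_eq_mul, mul_one, mul_neg] at htel
  omega

theorem exists_two_levels {f : ZMod n → ℕ}
    (hf : ∀ j, f (j + 1) = f j + 1 ∨ f j = f (j + 1) + 1)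
    (halt : ∀ j, f (j + 1) < f (j + 1 + 1) ↔ ¬ f j < f (j + 1)) (hpos : ∀ j, 0 < f j) :
    ∃ i, ∀ j, f j = i + 1 ∨ f j = i + 2 := by
  refine ⟨min (f 0) (f 1) - 1, fun j => ?_⟩
  have hlevel : ∀ j, (f j < f (j + 1) → f j = min (f 0) (f 1)) ∧
      (¬ f j < f (j + 1) → f j = min (f 0) (f 1) + 1) := by
    refine forall_of_add_one ?_ fun j hj => ?_
    · have := hf 0
      rw [zero_add] at this ⊢
      omega
    · have := hf j
      have := hf (j + 1)
      have := halt j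
      omega
  have := hlevel j
  have := hpos 0
  have := hpos 1
  omega

end ZMod

section Hasse

variable {Δ : SC V} {M : Finset (Finset V × Finset V)} {F G H : Finset V}

theorem mem_arcs_iff {a : Finset V × Finset V} :
    a ∈ arcs Δ ↔
      a.1 ∈ Δ.faces ∧ a.2 ∈ Δ.faces ∧ a.2 ⊆ a.1 ∧ a.2.card + 1 = a.1.card := by
  simp only [arcs, mem_filter, mem_product, and_assoc]

theorem card_add_one_of_mem_arcs (h : (F, G) ∈ arcs Δ) : G.card + 1 = F.card :=
  (mem_arcs_iff.1 h).2.2.2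

theorem sum_inc_eq_card {x : Finset V × Finset V → ℝ}
    (hx : ∀ a ∈ arcs Δ, x a = if a ∈ M then 1 else 0) (F : Finset V) :
    ∑ a ∈ inc Δ F, x a = #{a ∈ inc Δ F | a ∈ M} := by
  have hxF : ∀ a ∈ inc Δ F, x a = if a ∈ M then 1 else 0 := fun a ha =>
    hx a (mem_of_mem_filter a ha)
  rw [sum_congr rfl hxF, sum_boole]

theorem isMatching_iff_card_inc_le_one (hM : M ⊆ arcs Δ) :
    IsMatching Δ M ↔ ∀ F ∈ Δ.faces, #{a ∈ inc Δ F | a ∈ M} ≤ 1 := by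
  simp only [card_le_one, mem_filter, inc]
  constructor
  · rintro ⟨-, hdisj⟩ F - a ⟨⟨-, haF⟩, ha⟩ b ⟨⟨-, hbF⟩, hb⟩
    by_contra hne
    have := hdisj a ha b hb hne
    rcases haF with rfl | rfl <;> rcases hbF with hbF | hbF <;> tauto
  · intro h
    have hshare : ∀ F ∈ Δ.faces, ∀ a ∈ M, ∀ b ∈ M,
        (a.1 = F ∨ a.2 = F) → (b.1 = F ∨ b.2 = F) → a = b :=
      fun F hF a ha b hb haF hbF => h F hF a ⟨⟨hM ha, haF⟩, ha⟩ b ⟨⟨hM hb, hbF⟩, hb⟩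
    refine ⟨hM, fun a ha b hb hne => ?_⟩
    obtain ⟨h1, h2, -⟩ := mem_arcs_iff.1 (hM ha)
    refine ⟨fun e => hne ?_, fun e => hne ?_, fun e => hne ?_, fun e => hne ?_⟩
    · exact hshare _ h1 a ha b hb (.inl rfl) (.inl e.symm)
    · exact hshare _ h1 a ha b hb (.inl rfl) (.inr e.symm)
    · exact hshare _ h2 a ha b hb (.inr rfl) (.inl e.symm)
    · exact hshare _ h2 a ha b hb (.inr rfl) (.inr e.symm)

def HasseAdj (Δ : SC V) (F G : Finset V) : Prop :=
  (F, G) ∈ arcs Δ ∨ (G, F) ∈ arcs Δ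

theorem HasseAdj.card (h : HasseAdj Δ F G) : G.card = F.card + 1 ∨ F.card = G.card + 1 := by
  rcases h with h | h <;> have := card_add_one_of_mem_arcs h <;> omega

theorem HasseAdj.mem_faces (h : HasseAdj Δ F G) : F ∈ Δ.faces := by
  rcases h with h | h
  · exact (mem_arcs_iff.1 h).1
  · exact (mem_arcs_iff.1 h).2.1

theorem HasseAdj.edgeArc_mem_arcs (h : HasseAdj Δ F G) : edgeArc F G ∈ arcs Δ := by
  unfold edgeArc
  rcases h with h | h <;> have := card_add_one_of_mem_arcs h
  · rwa [if_neg (by omega)]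
  · rwa [if_pos (by omega)]

omit [DecidableEq V] in
theorem edgeArc_eq_or_eq (F G : Finset V) : edgeArc F G = (F, G) ∨ edgeArc F G = (G, F) := by
  unfold edgeArc
  split_ifs <;> simp

omit [DecidableEq V] in
theorem edgeArc_comm (h : F.card ≠ G.card) : edgeArc F G = edgeArc G F := by
  unfold edgeArc
  split_ifs <;> first | rfl | omega

theorem IsMatching.edgeArc_notMem (hM : IsMatching Δ M) (hFH : F ≠ H)
    (hFG : edgeArc F G ∈ M) : edgeArc G H ∉ M := by
  intro hGH
  by_cases heq : edgeArc F G = edgeArc G H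
  · rcases edgeArc_eq_or_eq F G with h1 | h1 <;> rcases edgeArc_eq_or_eq G H with h2 | h2 <;>
      rw [h1, h2, Prod.mk.injEq] at heq <;> exact hFH (by grind)
  · have := hM.2 _ hFG _ hGH heq
    rcases edgeArc_eq_or_eq F G with h1 | h1 <;> rcases edgeArc_eq_or_eq G H with h2 | h2 <;>
      simp only [h1, h2] at this <;> tauto

theorem hasseAdj_of_hMrel (hM : M ⊆ arcs Δ) (h : HMrel Δ M F G) : HasseAdj Δ F G :=
  h.imp And.left fun h => hM h

theorem hMrel_iff (hM : M ⊆ arcs Δ) (h : HasseAdj Δ F G) :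
    HMrel Δ M F G ↔ (edgeArc F G ∈ M ↔ F.card < G.card) := by
  unfold HMrel edgeArc
  rcases h with h | h <;> have hcard := card_add_one_of_mem_arcs h
  · have : (G, F) ∉ M := fun h' => by have := card_add_one_of_mem_arcs (hM h'); omega
    have hlt : ¬ F.card < G.card := by omega
    simp only [hlt, if_false, iff_false, h, true_and, this, or_false]
  · have : (F, G) ∉ arcs Δ := fun h' => by have := card_add_one_of_mem_arcs h'; omega
    have hlt : F.card < G.card := by omega
    simp only [hlt, if_true, iff_true, this, false_and, false_or]

theorem hMrel_swap_iff (hM : M ⊆ arcs Δ) (h : HasseAdj Δ F G) :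
    HMrel Δ M G F ↔ ¬ HMrel Δ M F G := by
  have hne : F.card ≠ G.card := by have := h.card; omega
  rw [hMrel_iff hM h.symm, hMrel_iff hM h, edgeArc_comm hne.symm]
  have hlt : G.card < F.card ↔ ¬ F.card < G.card := by omega
  rw [hlt]
  tauto

end Hasse

section Cycles

variable {Δ : SC V} {M : Finset (Finset V × Finset V)} {x : Finset V × Finset V → ℝ}
  {n : ℕ} {c : ZMod n → Finset V}

def matchedSteps [NeZero n] (M : Finset (Finset V × Finset V)) (c : ZMod n → Finset V) :
    Finset (ZMod n) :=
  {j | edgeArc (c j) (c (j + 1)) ∈ M}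

theorem mem_matchedSteps [NeZero n] {j : ZMod n} :
    j ∈ matchedSteps M c ↔ edgeArc (c j) (c (j + 1)) ∈ M := by
  simp [matchedSteps]

theorem cycleSum_eq_card [NeZero n] (hx : ∀ a ∈ arcs Δ, x a = if a ∈ M then 1 else 0)
    (hadj : ∀ j, HasseAdj Δ (c j) (c (j + 1))) :
    cycleSum x n c = #(matchedSteps M c) := by
  rw [cycleSum, matchedSteps, ZMod.sum_range_natCast fun j => x (edgeArc (c j) (c (j + 1))),
    sum_congr rfl fun j _ => hx _ (hadj j).edgeArc_mem_arcs, sum_boole]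

theorem IsMatching.add_one_notMem_matchedSteps [NeZero n] (hM : IsMatching Δ M) (hn : 3 ≤ n)
    (hinj : Function.Injective c) :
    ∀ j ∈ matchedSteps M c, j + 1 ∉ matchedSteps M c := by
  simp only [mem_matchedSteps]
  exact fun j => hM.edgeArc_notMem (hinj.ne (ZMod.ne_add_one_add_one hn j))

theorem not_isDirCycle_two (hM : M ⊆ arcs Δ) (c : ZMod 2 → Finset V) :
    ¬ IsDirCycle (HMrel Δ M) 2 c := by
  rintro ⟨-, -, hrel⟩
  have h0 : HMrel Δ M (c 0) (c 1) := hrel 0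
  have h1 : HMrel Δ M (c 1) (c 0) := hrel 1
  exact (hMrel_swap_iff hM (hasseAdj_of_hMrel hM h0)).1 h1 h0

theorem IsMorse.exists_not_hMrel (hM : IsMorse Δ M) (hn : 2 ≤ n)
    (hinj : Function.Injective c) : ∃ j, ¬ HMrel Δ M (c j) (c (j + 1)) := by
  by_contra! h
  exact hM.2 n c ⟨hn, hinj, h⟩

theorem IsMorse.exists_hMrel (hM : IsMorse Δ M) (hn : 2 ≤ n) (hinj : Function.Injective c)
    (hadj : ∀ j, HasseAdj Δ (c j) (c (j + 1))) : ∃ j, HMrel Δ M (c j) (c (j + 1)) := by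
  by_contra! h
  refine hM.2 n (fun j => c (-j)) ⟨hn, hinj.comp neg_injective, fun j => ?_⟩
  have hrev := (hMrel_swap_iff hM.1.1 (hadj (-(j + 1)))).2 (h _)
  rwa [show -(j + 1) + 1 = -j by ring] at hrev

theorem IsMorse.two_mul_card_matchedSteps_add_two_le [NeZero n] {i : ℕ} (hM : IsMorse Δ M)
    (hc : IsLevelCycle Δ i n c) : 2 * #(matchedSteps M c) + 2 ≤ n := by
  obtain ⟨hn, hinj, hadj, hlevel⟩ := hc
  replace hadj : ∀ j, HasseAdj Δ (c j) (c (j + 1)) := hadj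
  set U : Finset (ZMod n) := {j | (c j).card < (c (j + 1)).card}
  have hU : 2 * #U = n := ZMod.two_mul_card_ascents fun j => (hadj j).card
  have hUalt : ∀ j, j + 1 ∈ U ↔ j ∉ U := fun j => by
    have := (hadj j).card
    have := hlevel j
    have := hlevel (j + 1)
    have := (hadj (j + 1)).card
    have := hlevel (j + 1 + 1)
    simp only [U, mem_filter, mem_univ, true_and]
    omega
  have hSind := hM.1.add_one_notMem_matchedSteps hn hinj
  suffices 2 * #(matchedSteps M c) ≠ n by
    have := ZMod.two_mul_card_le_of_add_one_notMem hSind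
    omega
  intro hS
  have hSalt := ZMod.add_one_mem_iff_of_two_mul_card_eq hSind hS
  have hrel (j : ZMod n) :
      HMrel Δ M (c j) (c (j + 1)) ↔ (j ∈ matchedSteps M c ↔ j ∈ U) := by
    simpa only [U, mem_matchedSteps, mem_filter, mem_univ, true_and] using
      hMrel_iff hM.1.1 (hadj j)
  -- Two alternating step sets either agree everywhere or disagree everywhere.
  have hconst := ZMod.forall_iff_of_add_one_iff (p := fun j => HMrel Δ M (c j) (c (j + 1)))
    fun j => by simp only [hrel, hSalt, hUalt]; tauto
  obtain ⟨j, hj⟩ := hM.exists_hMrel (by omega) hinj hadj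
  obtain ⟨k, hk⟩ := hM.exists_not_hMrel (by omega) hinj
  exact hk ((hconst k).2 ((hconst j).1 hj))

theorem IsMorse.cycleSum_le {i : ℕ} (hM : IsMorse Δ M)
    (hx : ∀ a ∈ arcs Δ, x a = if a ∈ M then 1 else 0) (hc : IsLevelCycle Δ i n c) :
    cycleSum x n c ≤ n / 2 - 1 := by
  have : NeZero n := ⟨by have := hc.1; omega⟩
  have hcard : (2 * #(matchedSteps M c) + 2 : ℝ) ≤ n := by
    exact_mod_cast hM.two_mul_card_matchedSteps_add_two_le hc
  rw [cycleSum_eq_card hx hc.2.2.1]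
  linarith

theorem IsMatching.isMorse_of_cycleSum_le (hM : IsMatching Δ M)
    (hx : ∀ a ∈ arcs Δ, x a = if a ∈ M then 1 else 0)
    (hcyc : ∀ (i n : ℕ) (c : ZMod n → Finset V), IsLevelCycle Δ i n c →
      cycleSum x n c ≤ (n : ℝ) / 2 - 1) : IsMorse Δ M := by
  refine ⟨hM, fun n c hdir => ?_⟩
  obtain ⟨hn, hinj, hrel⟩ := hdir
  have : NeZero n := ⟨by omega⟩
  have hadj j := hasseAdj_of_hMrel hM.1 (hrel j)
  have hn3 : 3 ≤ n := by
    by_contra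
    obtain rfl : n = 2 := by omega
    exact not_isDirCycle_two hM.1 c ⟨hn, hinj, hrel⟩
  set U : Finset (ZMod n) := {j | (c j).card < (c (j + 1)).card}
  have hSU : matchedSteps M c = U :=
    filter_congr fun j _ => (hMrel_iff hM.1 (hadj j)).1 (hrel j)
  have hU : 2 * #U = n := ZMod.two_mul_card_ascents fun j => (hadj j).card
  have hUalt := ZMod.add_one_mem_iff_of_two_mul_card_eq
    (hSU ▸ hM.add_one_notMem_matchedSteps hn3 hinj) hU
  obtain ⟨i, hi⟩ := ZMod.exists_two_levels (fun j => (hadj j).card)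
    (fun j => by simpa only [U, mem_filter, mem_univ, true_and] using hUalt j)
    (fun j => card_pos.2 (Δ.nonempty_mem _ (hadj j).mem_faces))
  have hle := hcyc i n c ⟨hn3, hinj, hadj, hi⟩
  rw [cycleSum_eq_card hx hadj, hSU] at hle
  have hU' : (2 * #U : ℝ) = n := by exact_mod_cast hU
  linarith

end Cycles

/-- A 0/1 vector `x` on the arcs of the Hasse diagram is the
incidence vector of a Morse matching iff it satisfies all matching inequalities
`x(δ(F)) ≤ 1` and all cycle inequalities `x(C) ≤ |C|/2 - 1` for undirected
cycles `C` within a level. -/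
theorem incidence_vector_iff_matching_and_cycle_ineqs (Δ : SC V)
    (x : Finset V × Finset V → ℝ) (h01 : ∀ a ∈ arcs Δ, x a = 0 ∨ x a = 1) :
    (∃ M, IsMorse Δ M ∧ ∀ a ∈ arcs Δ, x a = if a ∈ M then 1 else 0) ↔
      ((∀ F ∈ Δ.faces, ∑ a ∈ inc Δ F, x a ≤ 1) ∧
        ∀ (i n : ℕ) (c : ZMod n → Finset V), IsLevelCycle Δ i n c →
          cycleSum x n c ≤ (n : ℝ) / 2 - 1) := by
  constructor
  · rintro ⟨M, hM, hx⟩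
    refine ⟨fun F hF => ?_, fun i n c hc => hM.cycleSum_le hx hc⟩
    rw [sum_inc_eq_card hx]
    exact_mod_cast (isMatching_iff_card_inc_le_one hM.1.1).1 hM.1 F hF
  · rintro ⟨hmatch, hcyc⟩
    set M := {a ∈ arcs Δ | x a = 1}
    have hx : ∀ a ∈ arcs Δ, x a = if a ∈ M then 1 else 0 := fun a ha => by
      rcases h01 a ha with h | h <;> simp [M, ha, h]
    have hM : IsMatching Δ M := (isMatching_iff_card_inc_le_one (filter_subset _ _)).2
      fun F hF => by exact_mod_cast sum_inc_eq_card hx F ▸ hmatch F hF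
    exact ⟨M, hM.isMorse_of_cycleSum_le hx hcyc, hx⟩
end

section
/- Let M be a Morse matching on a connected simplicial complex Δ of dimension at least 1. Define Γ(M) to be the graph obtained from the graph of Δ (vertices and 1-faces of Δ) by removing all edges (1-faces) that are matched to 2-faces in M. Then Γ(M) is connected. -/
open Finset

variable {V : Type*} [DecidableEq V]

/-- The graph of the simplicial complex `Δ`: two vertices are adjacent iff they
form a `1`-face of `Δ`. -/
def graphOf (Δ : SC V) : SimpleGraph V where
  Adj u v := u ≠ v ∧ ({u, v} : Finset V) ∈ Δ.faces
  symm := by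
    constructor
    rintro u v ⟨h1, h2⟩
    exact ⟨h1.symm, by rwa [Finset.pair_comm]⟩
  loopless := by constructor; rintro u ⟨h1, -⟩; exact h1 rfl

/-- The graph `Γ(M)`: the graph of `Δ` with all edges (1-faces) matched (to
2-faces) in `M` removed. -/
def gammaGraph (Δ : SC V) (M : Finset (Finset V × Finset V)) : SimpleGraph V where
  Adj u v := u ≠ v ∧ ({u, v} : Finset V) ∈ Δ.faces ∧
    ∀ T : Finset V, (T, ({u, v} : Finset V)) ∉ M
  symm := by
    constructor
    rintro u v ⟨h1, h2, h3⟩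
    refine ⟨h1.symm, by rwa [Finset.pair_comm], fun T => ?_⟩
    rw [Finset.pair_comm]; exact h3 T
  loopless := by constructor; rintro u ⟨h1, -, -⟩; exact h1 rfl

section Aux
variable {α : Type*}

/-- From a `TransGen` loop one can extract a simple directed cycle. -/
lemma aux_no_loop (r : α → α → Prop) (hirr : ∀ x, ¬ r x x)
    (hnc : ∀ (n : ℕ) (c : ZMod n → α), ¬ IsDirCycle r n c)
    (x : α) : ¬ Relation.TransGen r x x := by
  classical
  intro hx
  -- Step 1: produce a periodic `r`-sequence.
  obtain ⟨g, hg, m, hm, hper⟩ :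
      ∃ g : ℕ → α, (∀ n, r (g n) (g (n + 1))) ∧ ∃ m, 0 < m ∧ g 0 = g m := by
    obtain ⟨y, hxy, hyx⟩ := (Relation.TransGen.head'_iff).mp hx
    obtain ⟨l, hl, hlast⟩ := List.exists_isChain_cons_of_relationReflTransGen hyx
    set L : List α := x :: y :: l with hL
    have hchain : List.Chain' r L := List.isChain_cons_cons.mpr ⟨hxy, hl⟩
    have hlen : L.length = l.length + 2 := by simp [hL]
    set m := l.length + 1 with hmdef
    have hmL : m < L.length := by omega
    have hgetlast : L.get ⟨m, hmL⟩ = x := by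
      have e2 : L.get ⟨m, hmL⟩ = (y :: l).get ⟨l.length, by simp⟩ := rfl
      have e3 : (y :: l).get ⟨l.length, by simp⟩ = (y :: l).getLast (List.cons_ne_nil _ _) := by
        rw [List.getLast_eq_getElem]
        simp
      rw [e2, e3, hlast]
    refine ⟨fun n => L.get ⟨n % m, by
        have := Nat.mod_lt n (show 0 < m by omega); omega⟩, ?_, m, by omega, ?_⟩
    · intro n
      beta_reduce
      have h1 := List.isChain_iff_getElem.mp hchain
      have hlt : n % m < m := Nat.mod_lt _ (by omega)
      have getc : ∀ (j k : ℕ) (hj : j < L.length) (hk : k < L.length), j = k →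
          L.get ⟨j, hj⟩ = L.get ⟨k, hk⟩ := by
        intro j k hj hk h
        subst h
        rfl
      rcases eq_or_lt_of_le (Nat.succ_le_of_lt hlt) with heq | hlt2
      · have h2 : (n + 1) % m = 0 := by
          have h3 := Nat.div_add_mod n m
          have h4 : n + 1 = m * (n / m + 1) := by rw [Nat.mul_add, Nat.mul_one]; omega
          rw [h4, Nat.mul_mod_right]
        have e1 : L.get ⟨(n + 1) % m, by
              have := Nat.mod_lt (n + 1) (show 0 < m by omega); omega⟩
            = L.get ⟨n % m + 1, by omega⟩ := by
          calc L.get ⟨(n + 1) % m, _⟩ = L.get ⟨0, by omega⟩ := getc _ _ _ _ h2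
            _ = L.get ⟨m, hmL⟩ := hgetlast.symm
            _ = L.get ⟨n % m + 1, by omega⟩ := getc _ _ _ _ heq.symm
        exact e1.symm ▸ h1 (n % m) (by omega)
      · have h2 : (n + 1) % m = n % m + 1 := by
          have h3 := Nat.div_add_mod n m
          have h4 : n + 1 = (n % m + 1) + m * (n / m) := by omega
          rw [h4, Nat.add_mul_mod_self_left, Nat.mod_eq_of_lt hlt2]
        have e2 : L.get ⟨(n + 1) % m, by
              have := Nat.mod_lt (n + 1) (show 0 < m by omega); omega⟩
            = L.get ⟨n % m + 1, by omega⟩ := getc _ _ _ _ h2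
        exact e2.symm ▸ h1 (n % m) (by omega)
    · show L.get ⟨0 % m, _⟩ = L.get ⟨m % m, _⟩
      congr 1
      apply Fin.ext
      simp [Nat.mod_self]

  -- Step 2: take the minimal period.
  have hex : ∃ d, 0 < d ∧ ∃ i, g i = g (i + d) :=
    ⟨m, hm, 0, by rw [Nat.zero_add]; exact hper⟩
  obtain ⟨hdpos, i, hi⟩ := Nat.find_spec hex
  set d := Nat.find hex with hd
  have hd2 : 2 ≤ d := by
    by_contra h
    have hd1 : d = 1 := by omega
    rw [hd1] at hi
    exact hirr (g i) (hi ▸ hg i)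
  haveI : NeZero d := ⟨by omega⟩
  set c : ZMod d → α := fun k => g (i + k.val) with hc
  have main : ∀ a b : ZMod d, a.val < b.val → c a ≠ c b := by
    intro a b hab hcab
    have h1 : b.val < d := ZMod.val_lt b
    refine Nat.find_min hex (m := b.val - a.val) (by omega) ⟨by omega, i + a.val, ?_⟩
    have h2 : i + a.val + (b.val - a.val) = i + b.val := by omega
    rw [h2]
    exact hcab
  refine hnc d c ⟨hd2, ?_, ?_⟩
  · intro k1 k2 hk
    rcases lt_trichotomy k1.val k2.val with h | h | h
    · exact absurd hk (main _ _ h)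
    · exact ZMod.val_injective d h
    · exact absurd hk.symm (main _ _ h)
  · intro k
    have hkv : k.val < d := ZMod.val_lt k
    have hone : (1 : ZMod d).val = 1 := by
      rw [ZMod.val_one_eq_one_mod]
      exact Nat.mod_eq_of_lt (by omega)
    have hadd : (k + 1).val = (k.val + 1) % d := by
      rw [ZMod.val_add, hone]
    rcases eq_or_lt_of_le (Nat.succ_le_of_lt hkv) with h | h
    · have hd' : k.val + 1 = d := by omega
      have h0 : (k + 1).val = 0 := by rw [hadd, hd', Nat.mod_self]
      have hgi : g (i + 0) = g (i + k.val + 1) := by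
        rw [Nat.add_zero, show i + k.val + 1 = i + d by omega]
        exact hi
      show r (g (i + k.val)) (g (i + (k + 1).val))
      rw [h0, hgi]
      exact hg _
    · have h0 : (k + 1).val = k.val + 1 := by rw [hadd, Nat.mod_eq_of_lt h]
      show r (g (i + k.val)) (g (i + (k + 1).val))
      rw [h0, ← Nat.add_assoc]
      exact hg _
end Aux

/-- `HMrel` is irreflexive. -/
lemma hmrel_irrefl (Δ : SC V) (M : Finset (Finset V × Finset V))
    (hsub : M ⊆ arcs Δ) : ∀ X, ¬ HMrel Δ M X X := by
  intro X h
  have hm : (X, X) ∈ arcs Δ := by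
    rcases h with ⟨h, -⟩ | h
    · exact h
    · exact hsub h
  simp only [arcs, Finset.mem_filter, Finset.mem_product] at hm
  omega

open Classical in
/-- The number of faces reachable from `e` in `H(M)`. -/
noncomputable def mu (Δ : SC V) (M : Finset (Finset V × Finset V)) (e : Finset V) : ℕ :=
  (Δ.faces.filter fun F => Relation.ReflTransGen (HMrel Δ M) e F).card

lemma mu_lt (Δ : SC V) (M : Finset (Finset V × Finset V))
    (hnl : ∀ x, ¬ Relation.TransGen (HMrel Δ M) x x)
    {e e' : Finset V} (he : e ∈ Δ.faces)
    (h : Relation.TransGen (HMrel Δ M) e e') : mu Δ M e' < mu Δ M e := by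
  classical
  unfold mu
  apply Finset.card_lt_card
  rw [Finset.ssubset_iff_of_subset]
  · refine ⟨e, Finset.mem_filter.mpr ⟨he, Relation.ReflTransGen.refl⟩, fun hmem => ?_⟩
    have h2 := (Finset.mem_filter.mp hmem).2
    exact hnl e (Relation.TransGen.trans_left h h2)
  · intro F hF
    have h2 := Finset.mem_filter.mp hF
    exact Finset.mem_filter.mpr ⟨h2.1, (h.to_reflTransGen).trans h2.2⟩

lemma key_reachable (Δ : SC V) (M : Finset (Finset V × Finset V)) (hM : IsMorse Δ M) :
    ∀ (n : ℕ) (u v : V), u ≠ v → ({u, v} : Finset V) ∈ Δ.faces →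
      mu Δ M {u, v} ≤ n → (gammaGraph Δ M).Reachable u v := by
  classical
  have hnl : ∀ x, ¬ Relation.TransGen (HMrel Δ M) x x :=
    aux_no_loop _ (hmrel_irrefl Δ M hM.1.1) hM.2
  intro n
  induction n with
  | zero =>
    intro u v huv hf hmu
    exfalso
    have h1 : ({u, v} : Finset V) ∈ Δ.faces.filter
        (fun F => Relation.ReflTransGen (HMrel Δ M) {u, v} F) :=
      Finset.mem_filter.mpr ⟨hf, Relation.ReflTransGen.refl⟩
    have h2 := Finset.card_pos.mpr ⟨_, h1⟩
    have h3 : 0 < mu Δ M {u, v} := by unfold mu; convert h2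
    omega
  | succ n ih =>
    intro u v huv hf hmu
    by_cases hmatch : ∀ T, (T, ({u, v} : Finset V)) ∉ M
    · exact SimpleGraph.Adj.reachable ⟨huv, hf, hmatch⟩
    push_neg at hmatch
    obtain ⟨T, hT⟩ := hmatch
    have harc := hM.1.1 hT
    simp only [arcs, Finset.mem_filter, Finset.mem_product] at harc
    obtain ⟨⟨hTf, hef⟩, hsub, hcard⟩ := harc
    have hcard2 : ({u, v} : Finset V).card = 2 := by
      rw [Finset.card_insert_of_notMem (by simpa using huv), Finset.card_singleton]
    have hsd : (T \ {u, v}).card = 1 := by rw [Finset.card_sdiff_of_subset hsub]; omega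
    obtain ⟨w, hw⟩ := Finset.card_eq_one.mp hsd
    have hwmem : w ∈ T \ ({u, v} : Finset V) := hw ▸ Finset.mem_singleton_self w
    have hwT : w ∈ T := (Finset.mem_sdiff.mp hwmem).1
    have hwuv : w ∉ ({u, v} : Finset V) := (Finset.mem_sdiff.mp hwmem).2
    have hwu : w ≠ u := fun h => hwuv (by simp [h])
    have hwv : w ≠ v := fun h => hwuv (by simp [h])
    have huT : u ∈ T := hsub (by simp)
    have hvT : v ∈ T := hsub (by simp)
    -- the two other edges of the triangle T
    have hstep : ∀ e' : Finset V, e' ∈ Δ.faces → e' ⊆ T → e'.card = 2 →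
        e' ≠ {u, v} → Relation.TransGen (HMrel Δ M) {u, v} e' := by
      intro e' hf' hsub' hcard' hne
      have h1 : HMrel Δ M {u, v} T := Or.inr hT
      have h2 : HMrel Δ M T e' := by
        left
        refine ⟨?_, ?_⟩
        · simp only [arcs, Finset.mem_filter, Finset.mem_product]
          exact ⟨⟨hTf, hf'⟩, hsub', by omega⟩
        · intro hmem
          have hne2 : (T, ({u, v} : Finset V)) ≠ (T, e') := by
            intro hh
            exact hne (congrArg Prod.snd hh).symm
          exact (hM.1.2 _ hT _ hmem hne2).1 rfl
      exact Relation.TransGen.head h1 (Relation.TransGen.single h2)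
    have hsub1 : ({u, w} : Finset V) ⊆ T :=
      Finset.insert_subset huT (Finset.singleton_subset_iff.mpr hwT)
    have hsub2 : ({v, w} : Finset V) ⊆ T :=
      Finset.insert_subset hvT (Finset.singleton_subset_iff.mpr hwT)
    have he1 : ({u, w} : Finset V) ∈ Δ.faces :=
      Δ.down_closed T hTf _ ⟨u, by simp⟩ hsub1
    have he2 : ({v, w} : Finset V) ∈ Δ.faces :=
      Δ.down_closed T hTf _ ⟨v, by simp⟩ hsub2
    have hc1 : ({u, w} : Finset V).card = 2 := by
      rw [Finset.card_insert_of_notMem (by simpa using (Ne.symm hwu)), Finset.card_singleton]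
    have hc2 : ({v, w} : Finset V).card = 2 := by
      rw [Finset.card_insert_of_notMem (by simpa using (Ne.symm hwv)), Finset.card_singleton]
    have hne1 : ({u, w} : Finset V) ≠ {u, v} := by
      intro h
      have : v ∈ ({u, w} : Finset V) := h ▸ (by simp)
      simp only [Finset.mem_insert, Finset.mem_singleton] at this
      rcases this with h' | h'
      · exact huv h'.symm
      · exact hwv h'.symm
    have hne2 : ({v, w} : Finset V) ≠ {u, v} := by
      intro h
      have : u ∈ ({v, w} : Finset V) := h ▸ (by simp)
      simp only [Finset.mem_insert, Finset.mem_singleton] at this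
      rcases this with h' | h'
      · exact huv h'
      · exact hwu h'.symm
    have t1 := hstep _ he1 hsub1 hc1 hne1
    have t2 := hstep _ he2 hsub2 hc2 hne2
    have m1 : mu Δ M {u, w} ≤ n := by
      have := mu_lt Δ M hnl hef t1; omega
    have m2 : mu Δ M {v, w} ≤ n := by
      have := mu_lt Δ M hnl hef t2; omega
    have r1 := ih u w (Ne.symm hwu) he1 m1
    have r2 := ih v w (Ne.symm hwv) he2 m2
    exact r1.trans r2.symm

/-- If `Δ` is connected and `M` is a Morse matching, then the
graph `Γ(M)` obtained from the graph of `Δ` by removing all edges matched to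
`2`-faces is connected. -/
theorem gammaGraph_connected (Δ : SC V) (M : Finset (Finset V × Finset V))
    (hM : IsMorse Δ M) (hconn : (graphOf Δ).Connected) :
    (gammaGraph Δ M).Connected := by
  haveI : Nonempty V := hconn.nonempty
  constructor
  intro u v
  obtain ⟨p⟩ := hconn.preconnected u v
  induction p with
  | nil => exact SimpleGraph.Reachable.refl _
  | cons h p ih =>
    exact (key_reachable Δ M hM (mu Δ M _) _ _ h.1 h.2 le_rfl).trans ih
end
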